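/- arXiv:2109.13684 — 4 statements merged into one kernel-verified Lean document; each statement's English description precedes it below -/
import Mathlib

section
/- Let γ(α) = (√(1-4α) - 1)/2. Then ∑_{n=1}^∞ C_{n-1} α^n / n = -2γ(α) + ln(1 + γ(α)) for |α| < 1/4, where C_n are the Catalan numbers. -/
/-!
Both sides vanish at `0`, and both have derivative `C(x) = ∑ Cₙ xⁿ` on `(-1/4, 1/4)`: the left side
termwise, the right side because the Cauchy product gives `x C² = C - 1`, so that
`1 - 2xC = ±√(1 - 4x)`, and continuity from `C(0) = 1` selects the root
`C = 2 / (1 + √(1 - 4x))`, which is the derivative of `-2γ + log(1 + γ)`.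
-/

open Set

theorem catalan_le_four_pow (n : ℕ) : catalan n ≤ 4 ^ n :=
  calc catalan n ≤ (n + 1) * catalan n := Nat.le_mul_of_pos_left _ n.succ_pos
    _ = n.centralBinom := succ_mul_catalan_eq_centralBinom n
    _ ≤ 4 ^ n := Nat.centralBinom_le_four_pow n

theorem norm_catalan_mul_pow_le {x r : ℝ} (hx : |x| ≤ r) (n : ℕ) :
    ‖(catalan n : ℝ) * x ^ n‖ ≤ (4 * r) ^ n := by
  rw [norm_mul, norm_pow, Real.norm_natCast, Real.norm_eq_abs, mul_pow]
  gcongr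
  exact_mod_cast catalan_le_four_pow n

theorem summable_geometric_four_mul {r : ℝ} (hr₀ : 0 ≤ r) (hr : r < 1 / 4) :
    Summable fun n : ℕ => (4 * r) ^ n :=
  summable_geometric_of_lt_one (by positivity) (by linarith)

theorem summable_norm_catalan_mul_pow {x : ℝ} (hx : |x| < 1 / 4) :
    Summable fun n : ℕ => ‖(catalan n : ℝ) * x ^ n‖ :=
  (summable_geometric_four_mul (abs_nonneg x) hx).of_nonneg_of_le (fun _ => norm_nonneg _)
    (norm_catalan_mul_pow_le le_rfl)

noncomputable def catalanGF (x : ℝ) : ℝ := ∑' n : ℕ, (catalan n : ℝ) * x ^ n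

theorem catalanGF_sq_mul {x : ℝ} (hx : |x| < 1 / 4) :
    x * catalanGF x ^ 2 = catalanGF x - 1 := by
  have hsum := summable_norm_catalan_mul_pow hx
  have hsq : catalanGF x ^ 2 = ∑' n : ℕ, (catalan (n + 1) : ℝ) * x ^ n := by
    rw [sq, catalanGF, tsum_mul_tsum_eq_tsum_sum_antidiagonal_of_summable_norm hsum hsum]
    refine tsum_congr fun n => ?_
    rw [catalan_succ', Nat.cast_sum, Finset.sum_mul]
    refine Finset.sum_congr rfl fun ij hij => ?_
    rw [← Finset.HasAntidiagonal.mem_antidiagonal.1 hij, pow_add]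
    push_cast
    ring
  have hshift : catalanGF x = 1 + ∑' n : ℕ, (catalan (n + 1) : ℝ) * x ^ (n + 1) := by
    rw [catalanGF, (hsum.of_norm).tsum_eq_zero_add]
    simp
  rw [hsq, hshift, ← tsum_mul_left]
  simp only [add_sub_cancel_left, pow_succ]
  exact tsum_congr fun n => by ring

theorem continuousOn_catalanGF {r : ℝ} (hr : r < 1 / 4) :
    ContinuousOn catalanGF (Icc (-r) r) := by
  rcases lt_or_ge r 0 with hr₀ | hr₀
  · simp [Icc_eq_empty (by linarith : ¬ -r ≤ r)]
  exact continuousOn_tsum (fun n => by fun_prop) (summable_geometric_four_mul hr₀ hr)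
    fun n x hx => norm_catalan_mul_pow_le (abs_le.2 hx) n

theorem one_sub_two_mul_catalanGF {x : ℝ} (hx : |x| < 1 / 4) :
    1 - 2 * x * catalanGF x = √(1 - 4 * x) := by
  have hIcc : ∀ y ∈ Icc (-|x|) |x|, |y| < 1 / 4 ∧ 0 < 1 - 4 * y := fun y hy => by
    have := abs_le.2 hy
    exact ⟨this.trans_lt hx, by linarith [le_abs_self y]⟩
  refine isPreconnected_Icc.eq_of_sq_eq (f := fun y => 1 - 2 * y * catalanGF y)
    (continuousOn_const.sub ((continuousOn_const.mul continuousOn_id).mul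
      (continuousOn_catalanGF hx))) (by fun_prop)
    (fun y hy => ?_) (fun hy => (Real.sqrt_pos.2 (hIcc _ hy).2).ne')
    (y := 0) (by simp) (by simp) ⟨neg_abs_le x, le_abs_self x⟩
  obtain ⟨hy, hy₄⟩ := hIcc y hy
  simp only [Pi.pow_apply, Real.sq_sqrt hy₄.le]
  linear_combination 4 * y * catalanGF_sq_mul hy

theorem catalanGF_eq {x : ℝ} (hx : |x| < 1 / 4) :
    catalanGF x = 2 / (1 + √(1 - 4 * x)) := by
  rw [eq_div_iff (by positivity), ← one_sub_two_mul_catalanGF hx]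
  linear_combination -2 * catalanGF_sq_mul hx

theorem hasDerivAt_catalan_mul_pow_succ_div (n : ℕ) (x : ℝ) :
    HasDerivAt (fun y : ℝ => (catalan n : ℝ) * y ^ (n + 1) / (n + 1))
      ((catalan n : ℝ) * x ^ n) x := by
  refine (((hasDerivAt_pow (n + 1) x).const_mul (catalan n : ℝ)).div_const
    ((n : ℝ) + 1)).congr_deriv ?_
  push_cast
  field_simp

theorem hasDerivAt_tsum_catalan_mul_pow_succ_div {x : ℝ} (hx : |x| < 1 / 4) :
    HasDerivAt (fun y : ℝ => ∑' n : ℕ, (catalan n : ℝ) * y ^ (n + 1) / (n + 1))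
      (catalanGF x) x := by
  obtain ⟨r, hxr, hr⟩ := exists_between hx
  have hr₀ : 0 < r := (abs_nonneg x).trans_lt hxr
  exact hasDerivAt_tsum_of_isPreconnected (summable_geometric_four_mul hr₀.le hr)
    isOpen_Ioo isPreconnected_Ioo (fun n y _ => hasDerivAt_catalan_mul_pow_succ_div n y)
    (fun n y hy => norm_catalan_mul_pow_le (abs_lt.2 hy).le n) (y₀ := 0)
    ⟨neg_neg_of_pos hr₀, hr₀⟩ (by simp) (abs_lt.1 hxr)

theorem hasDerivAt_neg_two_mul_add_log_one_add {x : ℝ} (hx : x < 1 / 4) :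
    HasDerivAt
      (fun y : ℝ => -2 * ((√(1 - 4 * y) - 1) / 2) + Real.log (1 + (√(1 - 4 * y) - 1) / 2))
      (2 / (1 + √(1 - 4 * x))) x := by
  have hpos : 0 < 1 - 4 * x := by linarith
  have ht : 0 < √(1 - 4 * x) := Real.sqrt_pos.2 hpos
  have hsqrt :
      HasDerivAt (fun y : ℝ => (√(1 - 4 * y) - 1) / 2) (-4 / (2 * √(1 - 4 * x)) / 2) x :=
    ((((hasDerivAt_id x).const_mul 4).const_sub 1).sqrt (by simpa using hpos.ne')).sub_const 1
      |>.div_const 2 |>.congr_deriv (by simp)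
  refine ((hsqrt.const_mul (-2)).add ((hsqrt.const_add 1).log (by linarith))).congr_deriv ?_
  generalize √(1 - 4 * x) = t at ht ⊢
  have h1t : 1 + t ≠ 0 := by positivity
  rw [show 1 + (t - 1) / 2 = (1 + t) / 2 by ring]
  field_simp
  ring

/-- With γ(α) = (√(1-4α)-1)/2, one has
∑_{n≥1} C_{n-1} α^n / n = -2γ(α) + ln(1+γ(α)) for |α| < 1/4. -/
theorem stmt_2 (α : ℝ) (hα : |α| < 1/4)
    (γ : ℝ → ℝ) (hγ : ∀ a, γ a = (Real.sqrt (1 - 4*a) - 1) / 2) :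
    ∑' n : ℕ, (catalan n : ℝ) * α ^ (n + 1) / (n + 1)
      = -2 * γ α + Real.log (1 + γ α) := by
  obtain rfl : γ = fun a => (√(1 - 4 * a) - 1) / 2 := funext hγ
  have hF (x : ℝ) (hx : x ∈ Ioo (-(1 / 4)) (1 / 4)) :=
    hasDerivAt_tsum_catalan_mul_pow_succ_div (abs_lt.2 hx)
  have hG (x : ℝ) (hx : x ∈ Ioo (-(1 / 4)) (1 / 4)) :=
    hasDerivAt_neg_two_mul_add_log_one_add hx.2
  refine isOpen_Ioo.eqOn_of_deriv_eq isPreconnected_Ioo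
    (fun x hx => (hF x hx).differentiableAt.differentiableWithinAt)
    (fun x hx => (hG x hx).differentiableAt.differentiableWithinAt)
    (fun x hx => ?_) (x := 0) (by norm_num) (by simp) (abs_lt.1 hα)
  rw [(hF x hx).deriv, (hG x hx).deriv, catalanGF_eq (abs_lt.2 hx)]
end

section
/- Let s be a real parameter and suppose γ(α) = ∑_{n≥1} c_n α^n is a formal power series solving the ODE -(γ + γ·(s α γ' + γ)) = α, i.e. -γ(α) - γ(α)·(s α γ'(α) + γ(α)) = α as formal power series. Then c₁ = -1, c₂ = -(s+1), c₃ = -(s+1)(2+3s), and c₄ = -(s+1)(2s+1)(7s+5). -/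
/-!
Since `X * γ'` has `n`-th coefficient `n c_n`, comparing `n`-th coefficients in the equation gives
`-c_n - ∑_{i + j = n} (s j + 1) c_i c_j = [n = 1]`. As `c_0 = 0`, the sum only involves `c_1, …, c_{n-1}`,
so the coefficients are determined one after another.
-/

open PowerSeries Finset

namespace PowerSeries

variable {R : Type*} [CommRing R]

theorem coeff_X_mul_derivative (f : R⟦X⟧) (n : ℕ) :
    coeff n (X * derivative R f) = n * coeff n f := by
  cases n with
  | zero => simp
  | succ n => rw [coeff_succ_X_mul, coeff_derivative, mul_comm, Nat.cast_succ]

theorem coeff_neg_sub_mul_smul_X_mul_derivative_add (s : R) (γ : R⟦X⟧) (n : ℕ) :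
    coeff n (-γ - γ * (s • (X * derivative R γ) + γ)) =
      -coeff n γ - ∑ p ∈ antidiagonal n, (s * p.2 + 1) * coeff p.1 γ * coeff p.2 γ := by
  rw [map_sub, map_neg, coeff_mul]
  congr 2 with p
  rw [map_add, coeff_smul, coeff_X_mul_derivative, smul_eq_mul]
  ring

end PowerSeries

open PowerSeries in
/-- If γ(α) = ∑_{n≥1} c_n α^n solves the RG equation
-γ - γ·(sαγ' + γ) = α of the nonlinear D=4 Dyson-Schwinger equation, then
c₁ = -1, c₂ = -(s+1), c₃ = -(s+1)(2+3s), c₄ = -(s+1)(2s+1)(7s+5). -/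
theorem stmt_11 (s : ℝ) (γ : PowerSeries ℝ)
    (hγ0 : PowerSeries.constantCoeff γ = 0)
    (hode : -γ - γ * (s • (PowerSeries.X * PowerSeries.derivative ℝ γ) + γ)
      = PowerSeries.X) :
    PowerSeries.coeff 1 γ = -1 ∧
    PowerSeries.coeff 2 γ = -(s + 1) ∧
    PowerSeries.coeff 3 γ = -(s + 1) * (2 + 3*s) ∧
    PowerSeries.coeff 4 γ = -(s + 1) * (2*s + 1) * (7*s + 5) := by
  have h n := congrArg (coeff n) hode
  simp only [coeff_neg_sub_mul_smul_X_mul_derivative_add, coeff_X] at h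
  have h1 := h 1; have h2 := h 2; have h3 := h 3; have h4 := h 4
  simp only [Nat.sum_antidiagonal_eq_sum_range_succ_mk, sum_range_succ, range_one, sum_singleton,
    Nat.reduceSub, Nat.add_one_sub_one, tsub_zero, tsub_self, Nat.cast_one,
    Nat.cast_ofNat, CharP.cast_eq_zero, coeff_zero_eq_constantCoeff, hγ0, mul_zero, zero_mul,
    mul_one, one_mul, zero_add, add_zero, ↓reduceIte, OfNat.ofNat_ne_one] at h1 h2 h3 h4
  have hc1 : coeff 1 γ = -1 := by linear_combination -h1
  rw [hc1] at h2 h3 h4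
  have hc2 : coeff 2 γ = -(s + 1) := by linear_combination -h2
  rw [hc2] at h3 h4
  have hc3 : coeff 3 γ = -(s + 1) * (2 + 3 * s) := by linear_combination -h3
  rw [hc3] at h4
  exact ⟨hc1, hc2, hc3, by linear_combination -h4⟩
end

section
/- Let F : ℝ → ℝ be differentiable. Then G(α, x) := α · F(ln x - 1/α) satisfies the partial differential equation ∂_{ln x} G = -α G + α² ∂_α G for all α ≠ 0, x > 0. -/
/-!
Both sides of the equation equal `α · F'(log x - 1/α)`: the chain rule gives
`x ∂ₓG = α F'(u)` and `∂_α G = F(u) + F'(u)/α` with `u = log x - 1/α`, and the `F(u)` terms cancel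
against `-α G = -α² F(u)`.
-/

open Real

theorem hasDerivAt_const_mul_comp_log_sub {F : ℝ → ℝ} {a c x : ℝ} (hx : x ≠ 0)
    (hF : DifferentiableAt ℝ F (log x - c)) :
    HasDerivAt (fun y => a * F (log y - c)) (a * (deriv F (log x - c) / x)) x := by
  have hlog : HasDerivAt (fun y => log y - c) x⁻¹ x := (hasDerivAt_log hx).sub_const c
  simpa [div_eq_mul_inv] using (hF.hasDerivAt.comp x hlog).const_mul a

theorem hasDerivAt_mul_comp_sub_one_div {F : ℝ → ℝ} {t a : ℝ} (ha : a ≠ 0)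
    (hF : DifferentiableAt ℝ F (t - 1 / a)) :
    HasDerivAt (fun b => b * F (t - 1 / b)) (F (t - 1 / a) + deriv F (t - 1 / a) / a) a := by
  have hinner : HasDerivAt (fun b : ℝ => t - 1 / b) (1 / a ^ 2) a := by
    simpa [one_div] using (hasDerivAt_inv ha).const_sub t
  have hcomp : HasDerivAt (fun b => F (t - 1 / b)) (deriv F (t - 1 / a) * (1 / a ^ 2)) a :=
    hF.hasDerivAt.comp a hinner
  refine ((hasDerivAt_id' a).fun_mul hcomp).congr_deriv ?_
  field_simp

/-- For any differentiable F, G(α,x) = α·F(ln x - 1/α) solves the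
Callan-Symanzik equation ∂_{ln x} G = -α G + α² ∂_α G (case γ(α) = -α,
β(α) = α of Kreimer's toy model). -/
theorem stmt_13 (F : ℝ → ℝ) (hF : Differentiable ℝ F)
    (G : ℝ → ℝ → ℝ) (hG : ∀ a x, G a x = a * F (Real.log x - 1/a)) :
    ∀ (α : ℝ), α ≠ 0 → ∀ (x : ℝ), 0 < x →
      x * deriv (fun y => G α y) x = -α * G α x + α^2 * deriv (fun a => G a x) α := by
  intro α hα x hx
  have hGx : (fun y => G α y) = fun y => α * F (log y - 1 / α) := funext (hG α)
  have hGα : (fun a => G a x) = fun a => a * F (log x - 1 / a) := funext (hG · x)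
  rw [hGx, hGα, (hasDerivAt_const_mul_comp_log_sub hx.ne' (hF _)).deriv,
    (hasDerivAt_mul_comp_sub_one_div hα (hF _)).deriv, hG]
  field_simp
  ring
end

section
/- Let γ(α) be a formal power series with γ(0) = 0, s a real number, and L(α) a formal power series (denoting ln δ(α)). Suppose the family γ_k(α) (k ≥ 0) satisfies γ₀ = 1, and the Callan-Symanzik recursion k γ_k = γ·(1 + s α ∂_α) γ_{k-1} for all k ≥ 1. Define γ'_k(α) := ∑_{j=k}^∞ (j choose k) γ_j(α) L(α)^{j-k} (well-defined as formal power series since γ_j ∈ O(α^j)). Then the γ'_k satisfy the recursion (k+1) γ'_{k+1} = γ' · (1 + s α ∂_α) γ'_k, where γ'(α) := γ(α) / (1 + s γ(α) · α ∂_α L(α)). -/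
/-!
Write θ = α∂_α. The finite sums G_N(k) = ∑_{j ≤ N} C(j,k) γ_j L^(j-k) agree with γ'_k modulo
α^(N+1), because γ_j ∈ O(α^j). For them the claim is an exact identity, valid for any derivation θ:
γ(1 + sθ) applied to γ_j L^(j-k) gives (j+1) γ_{j+1} L^(j-k) by the Callan-Symanzik recursion plus
(j-k) sγ θL γ_j L^(j-k-1) by the Leibniz rule, and the Pascal-type identities
(j+1) C(j,k) = (k+1) C(j+1,k+1) and (j-k) C(j,k) = (k+1) C(j,k+1) reassemble the sum into
(k+1)(G_{N+1}(k+1) + sγ θL G_N(k+1)). Reducing modulo α^(N+1) for every N and dividing by the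
unit 1 + sγ θL gives the theorem.
-/

open PowerSeries Finset

section ShiftedSum

variable {R A : Type*} [CommSemiring R] [CommSemiring A] [Algebra R A]

/-- Terms with `j < k` vanish because of the binomial coefficient, so the truncated
subtraction `j - k` is harmless. -/
def shiftedSum (γk : ℕ → A) (L : A) (N k : ℕ) : A :=
  ∑ j ∈ range (N + 1), (j.choose k : A) * γk j * L ^ (j - k)

theorem sum_choose_mul_succ_eq_shiftedSum (γk : ℕ → A) (L : A) (N k : ℕ) :
    ∑ j ∈ range (N + 1), (j.choose k : A) * (j + 1) * γk (j + 1) * L ^ (j - k) =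
      (k + 1) * shiftedSum γk L (N + 1) (k + 1) := by
  rw [shiftedSum, mul_sum, sum_range_succ' _ (N + 1)]
  simp only [Nat.choose_zero_succ, Nat.cast_zero, zero_mul, mul_zero, add_zero,
    Nat.add_sub_add_right, ← mul_assoc]
  refine sum_congr rfl fun j _ => ?_
  have h : (j.choose k * (j + 1) : ℕ) = (k + 1) * (j + 1).choose (k + 1) := by
    rw [mul_comm, Nat.add_one_mul_choose_eq, mul_comm]
  exact_mod_cast congrArg (fun n : ℕ => (n : A) * γk (j + 1) * L ^ (j - k)) h

theorem sum_choose_mul_sub_eq_shiftedSum (γk : ℕ → A) (L : A) (N k : ℕ) :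
    ∑ j ∈ range (N + 1), (j.choose k : A) * ((j - k : ℕ) : A) * γk j * L ^ (j - k - 1) =
      (k + 1) * shiftedSum γk L N (k + 1) := by
  rw [shiftedSum, mul_sum]
  refine sum_congr rfl fun j _ => ?_
  rw [Nat.sub_sub, ← Nat.cast_mul, ← Nat.choose_succ_right_eq]
  push_cast
  ring

variable (θ : Derivation R A A)

theorem mul_add_derivation_mul_pow (γ s x L : A) (i : ℕ) :
    γ * (x * L ^ i + s * θ (x * L ^ i)) =
      γ * (x + s * θ x) * L ^ i + i * (s * γ * θ L) * (x * L ^ (i - 1)) := by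
  rw [θ.leibniz, θ.leibniz_pow]
  simp only [smul_eq_mul, nsmul_eq_mul]
  ring

theorem mul_shiftedSum_add_derivation {γ s L : A} {γk : ℕ → A}
    (hrec : ∀ j : ℕ, (j + 1 : A) * γk (j + 1) = γ * (γk j + s * θ (γk j))) (N k : ℕ) :
    γ * (shiftedSum γk L N k + s * θ (shiftedSum γk L N k)) =
      (k + 1) * (shiftedSum γk L (N + 1) (k + 1) + s * γ * θ L * shiftedSum γk L N (k + 1)) := by
  have hθ : θ (shiftedSum γk L N k) =
      ∑ j ∈ range (N + 1), (j.choose k : A) * θ (γk j * L ^ (j - k)) := by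
    simp only [shiftedSum, map_sum, mul_assoc]
    refine sum_congr rfl fun j _ => ?_
    rw [θ.leibniz, θ.map_natCast, smul_zero, add_zero, smul_eq_mul]
  calc γ * (shiftedSum γk L N k + s * θ (shiftedSum γk L N k))
      = ∑ j ∈ range (N + 1), (j.choose k : A) *
          (γ * (γk j * L ^ (j - k) + s * θ (γk j * L ^ (j - k)))) := by
        rw [hθ, shiftedSum, mul_sum, ← sum_add_distrib, mul_sum]
        exact sum_congr rfl fun j _ => by ring
    _ = ∑ j ∈ range (N + 1), (j.choose k : A) *
          ((j + 1) * γk (j + 1) * L ^ (j - k) +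
            ((j - k : ℕ) : A) * (s * γ * θ L) * (γk j * L ^ (j - k - 1))) := by
        simp only [mul_add_derivation_mul_pow, ← hrec]
    _ = _ := by
        rw [mul_add, ← sum_choose_mul_succ_eq_shiftedSum, mul_left_comm,
          ← sum_choose_mul_sub_eq_shiftedSum, mul_sum, ← sum_add_distrib]
        exact sum_congr rfl fun j _ => by ring

end ShiftedSum

namespace PowerSeries

variable (R : Type*) [CommRing R]

noncomputable def eulerDerivation : Derivation R R⟦X⟧ R⟦X⟧ := (X : R⟦X⟧) • derivative R

variable {R}

theorem eulerDerivation_apply (f : R⟦X⟧) : eulerDerivation R f = X * derivative R f := rfl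

theorem coeff_eulerDerivation (f : R⟦X⟧) (n : ℕ) :
    coeff n (eulerDerivation R f) = n * coeff n f := by
  cases n with
  | zero => simp [eulerDerivation_apply]
  | succ n =>
    rw [eulerDerivation_apply, coeff_succ_X_mul, coeff_derivative]
    push_cast
    ring

theorem X_pow_dvd_eulerDerivation {f : R⟦X⟧} {n : ℕ} (h : X ^ n ∣ f) :
    X ^ n ∣ eulerDerivation R f := by
  rw [X_pow_dvd_iff] at h ⊢
  intro m hm
  rw [coeff_eulerDerivation, h m hm, mul_zero]

theorem eq_of_forall_X_pow_dvd_sub {f g : R⟦X⟧} (h : ∀ N, X ^ (N + 1) ∣ f - g) : f = g := by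
  ext n
  rw [← sub_eq_zero, ← map_sub]
  exact X_pow_dvd_iff.mp (h n) n n.lt_succ_self

theorem X_pow_dvd_sub_shiftedSum {γk γk' : ℕ → R⟦X⟧} {L : R⟦X⟧}
    (hord : ∀ j, X ^ j ∣ γk j)
    (hdef : ∀ k n : ℕ, coeff n (γk' k) =
      ∑ j ∈ Icc k n, (j.choose k : R) * coeff n (γk j * L ^ (j - k)))
    (N k : ℕ) : X ^ (N + 1) ∣ γk' k - shiftedSum γk L N k := by
  rw [X_pow_dvd_iff]
  intro n hn
  rw [map_sub, sub_eq_zero, hdef, shiftedSum, map_sum]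
  simp only [mul_assoc, ← map_natCast C, coeff_C_mul]
  refine sum_subset (fun j hj => ?_) fun j _ hj => ?_
  · simp only [mem_Icc, mem_range] at hj ⊢
    omega
  · simp only [mem_Icc, not_and_or, not_le] at hj
    rcases hj with hjk | hnj
    · rw [Nat.choose_eq_zero_of_lt hjk, Nat.cast_zero, zero_mul]
    · rw [X_pow_dvd_iff.mp ((hord j).mul_right _) n hnj, mul_zero]

theorem shifted_callanSymanzik {s γ L : R⟦X⟧} {γk γk' : ℕ → R⟦X⟧}
    (hord : ∀ j, X ^ j ∣ γk j)
    (hrec : ∀ j : ℕ, (j + 1 : R⟦X⟧) * γk (j + 1) =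
      γ * (γk j + s * eulerDerivation R (γk j)))
    (hdef : ∀ k n : ℕ, coeff n (γk' k) =
      ∑ j ∈ Icc k n, (j.choose k : R) * coeff n (γk j * L ^ (j - k)))
    (k : ℕ) :
    (1 + s * (γ * eulerDerivation R L)) * ((k + 1) * γk' (k + 1)) =
      γ * (γk' k + s * eulerDerivation R (γk' k)) := by
  set θ := eulerDerivation R
  have htrunc := X_pow_dvd_sub_shiftedSum hord hdef
  refine eq_of_forall_X_pow_dvd_sub fun N => ?_
  have hid := mul_shiftedSum_add_derivation θ hrec (L := L) N k
  set G := shiftedSum γk L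
  have key : (1 + s * (γ * θ L)) * ((k + 1) * γk' (k + 1)) - γ * (γk' k + s * θ (γk' k)) =
      (k + 1) * (γk' (k + 1) - G (N + 1) (k + 1)) +
        (k + 1) * s * γ * θ L * (γk' (k + 1) - G N (k + 1)) -
        γ * (γk' k - G N k) - s * γ * θ (γk' k - G N k) := by
    rw [map_sub]
    linear_combination -hid
  rw [key]
  have hN : X ^ (N + 1) ∣ γk' (k + 1) - G (N + 1) (k + 1) :=
    (pow_dvd_pow X (N + 1).le_succ).trans (htrunc (N + 1) (k + 1))
  exact dvd_sub (dvd_sub (dvd_add (hN.mul_left _) ((htrunc N (k + 1)).mul_left _))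
    ((htrunc N k).mul_left _)) ((X_pow_dvd_eulerDerivation (htrunc N k)).mul_left _)

end PowerSeries

open PowerSeries in
theorem stmt_16_general (s : ℝ) (γ L : PowerSeries ℝ)
    (γk : ℕ → PowerSeries ℝ)
    (hord : ∀ j n : ℕ, n < j → PowerSeries.coeff n (γk j) = 0)
    (hrec : ∀ k : ℕ, 1 ≤ k →
      (k : ℝ) • γk k =
        γ * (γk (k-1) + s • (PowerSeries.X * PowerSeries.derivative ℝ (γk (k-1)))))
    (γk' : ℕ → PowerSeries ℝ)
    (hdef : ∀ k n : ℕ, PowerSeries.coeff n (γk' k) =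
      ∑ j ∈ Finset.Icc k n,
        (Nat.choose j k : ℝ) * PowerSeries.coeff n (γk j * L ^ (j - k)))
    (γ' : PowerSeries ℝ)
    (hγ' : γ' = γ *
      (1 + s • (γ * (PowerSeries.X * PowerSeries.derivative ℝ L)))⁻¹) :
    ∀ k : ℕ, ((k : ℝ) + 1) • γk' (k+1) =
      γ' * (γk' k + s • (PowerSeries.X * PowerSeries.derivative ℝ (γk' k))) := by
  intro k
  simp only [← eulerDerivation_apply, smul_eq_C_mul, map_add, map_natCast, map_one] at hrec hγ' ⊢
  have hrec' (j : ℕ) : (j + 1 : ℝ⟦X⟧) * γk (j + 1) =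
      γ * (γk j + C s * eulerDerivation ℝ (γk j)) := by
    simpa using hrec (j + 1) j.succ_pos
  have h := shifted_callanSymanzik (fun j => X_pow_dvd_iff.mpr (hord j)) hrec' hdef k
  set u := 1 + C s * (γ * eulerDerivation ℝ L)
  have hu : u⁻¹ * u = 1 := PowerSeries.inv_mul_cancel _ (by simp [u, eulerDerivation_apply])
  rw [hγ', mul_comm γ, mul_assoc, ← h, ← mul_assoc, hu, one_mul]

open PowerSeries in
/-- Shifting the kinematic renormalization point by δ(α) = e^{L(α)} transforms
log-expansion coefficients γ_k satisfying the Callan-Symanzik recursion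
k γ_k = γ(1+sα∂_α)γ_{k-1} into γ'_k = ∑_{j≥k} (j choose k) γ_j L^{j-k}, which
satisfy the same recursion with anomalous dimension
γ' = γ/(1 + sγ·α∂_α L). -/
theorem stmt_16 (s : ℝ) (γ L : PowerSeries ℝ)
    (hγ0 : PowerSeries.constantCoeff γ = 0)
    (γk : ℕ → PowerSeries ℝ)
    (h0 : γk 0 = 1)
    (hord : ∀ j n : ℕ, n < j → PowerSeries.coeff n (γk j) = 0)
    (hrec : ∀ k : ℕ, 1 ≤ k →
      (k : ℝ) • γk k =
        γ * (γk (k-1) + s • (PowerSeries.X * PowerSeries.derivative ℝ (γk (k-1)))))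
    (γk' : ℕ → PowerSeries ℝ)
    (hdef : ∀ k n : ℕ, PowerSeries.coeff n (γk' k) =
      ∑ j ∈ Finset.Icc k n,
        (Nat.choose j k : ℝ) * PowerSeries.coeff n (γk j * L ^ (j - k)))
    (γ' : PowerSeries ℝ)
    (hγ' : γ' = γ *
      (1 + s • (γ * (PowerSeries.X * PowerSeries.derivative ℝ L)))⁻¹) :
    ∀ k : ℕ, ((k : ℝ) + 1) • γk' (k+1) =
      γ' * (γk' k + s • (PowerSeries.X * PowerSeries.derivative ℝ (γk' k))) :=
  stmt_16_general s γ L γk hord hrec γk' hdef γ' hγ'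
end
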